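/- Let l ≥ 3. The even endomorphisms H_{ξ₁η₂} = L_{η₂}∘∂_{η₁} − L_{ξ₁}∘∂_{ξ₂} and H_{ξ₂η₃} = L_{η₃}∘∂_{η₂} − L_{ξ₂}∘∂_{ξ₃} of Λ each commute with the odd endomorphism H_{η₁η₂η₃}: [H_{ξ₁η₂}, H_{η₁η₂η₃}] = 0 and [H_{ξ₂η₃}, H_{η₁η₂η₃}] = 0 (commutators). These realize the relations {ξ₁η₂, η₁η₂η₃} = 0 and {ξ₂η₃, η₁η₂η₃} = 0 between the Chevalley-type generators of n₊ of o(2l) and the extra generator Y = H_{η₁η₂η₃} of h(0|2l) stated in the paper (§2.1.2). -/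

import Mathlib

/-- The exterior algebra Λ of ℂ^{2l}, with generators indexed by
`Fin l ⊕ Fin l` (left = ξ's, right = η's). -/
noncomputable abbrev Lam (l : ℕ) := ExteriorAlgebra ℂ ((Fin l ⊕ Fin l) → ℂ)

/-- The generator of Λ corresponding to index `a` (image of the standard basis). -/
noncomputable def gen (l : ℕ) (a : Fin l ⊕ Fin l) : Lam l :=
  ExteriorAlgebra.ι ℂ (Pi.single a 1)

/-- The generator ξᵢ. -/
noncomputable def xiv (l : ℕ) (i : Fin l) : Lam l := gen l (Sum.inl i)

/-- The generator ηᵢ. -/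
noncomputable def etav (l : ℕ) (i : Fin l) : Lam l := gen l (Sum.inr i)

/-- L_g : left exterior multiplication by g. -/
noncomputable def Lmul (l : ℕ) (g : Lam l) : Module.End ℂ (Lam l) :=
  LinearMap.mulLeft ℂ g

/-- `IsContraction l a D` says that `D` is the contraction ∂_ζ with the dual of
the generator ζ indexed by `a`: it kills 1, sends the generator indexed by `b`
to δ_{ab}·1, and satisfies ∂(xy) = ∂(x)y + (−1)ᵖ x ∂(y) whenever x is a product
of p generators. -/
def IsContraction (l : ℕ) (a : Fin l ⊕ Fin l) (D : Module.End ℂ (Lam l)) : Prop :=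
  D 1 = 0 ∧
  (∀ b, D (gen l b) = if a = b then 1 else 0) ∧
  (∀ (p : ℕ) (g : Fin p → (Fin l ⊕ Fin l)) (y : Lam l),
    D ((List.ofFn fun k => gen l (g k)).prod * y) =
      D ((List.ofFn fun k => gen l (g k)).prod) * y +
        ((-1 : ℂ) ^ p) • ((List.ofFn fun k => gen l (g k)).prod * D y))

/-- The Hamiltonian vector field H_f = Σᵢ (L_{∂_{ξᵢ}f} ∘ ∂_{ηᵢ} + L_{∂_{ηᵢ}f} ∘ ∂_{ξᵢ}),
realized as an endomorphism of Λ; `pd a` is the contraction operator ∂ with the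
generator indexed by `a`. -/
noncomputable def Ham (l : ℕ) (pd : (Fin l ⊕ Fin l) → Module.End ℂ (Lam l))
    (f : Lam l) : Module.End ℂ (Lam l) :=
  ∑ i : Fin l,
    (Lmul l (pd (Sum.inl i) f) ∘ₗ pd (Sum.inr i) +
     Lmul l (pd (Sum.inr i) f) ∘ₗ pd (Sum.inl i))

/-!
Left multiplications `L_a` by the generators and the contractions `∂_a` satisfy the canonical
anticommutation relations. Hence the even operators `E_ab = L_a ∂_b` act by commutators like
matrix units, `[E_ab, L_c] = δ_bc L_a` and `[E_ab, ∂_c] = -δ_ac ∂_b`, and since the commutator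
with `E_ab` is a derivation of composition, `[H_{ξ_p η_q}, H_{η_p η_q η_r}]` can be computed
factor by factor: the terms cancel in pairs, except those containing `L_{η_q}² = 0`.
-/

theorem ExteriorAlgebra.eq_zero_of_map_one_of_map_ι_mul {R M : Type*} [CommRing R]
    [AddCommGroup M] [Module R M] (F : Module.End R (ExteriorAlgebra R M)) (h1 : F 1 = 0)
    (hι : ∀ m y, F (ι R m * y) = ι R m * F y) : F = 0 := by
  have hmul : ∀ x y, F (x * y) = x * F y := by
    intro x
    induction x using ExteriorAlgebra.induction with
    | algebraMap r => simp [Algebra.algebraMap_eq_smul_one]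
    | ι m => exact hι m
    | mul x₁ x₂ h₁ h₂ => intro y; rw [mul_assoc, h₁, h₂, mul_assoc]
    | add x₁ x₂ h₁ h₂ => intro y; rw [add_mul, map_add, h₁, h₂, add_mul]
  exact LinearMap.ext fun x => by simpa [h1] using hmul x 1

theorem ExteriorAlgebra.ι_mul_ι_mul_ι_rotate {R M : Type*} [CommRing R] [AddCommGroup M]
    [Module R M] (x y z : M) : ι R x * ι R y * ι R z = ι R y * ι R z * ι R x := by
  rw [eq_neg_of_add_eq_zero_left (ι_add_mul_swap x y), neg_mul, mul_assoc,
    eq_neg_of_add_eq_zero_left (ι_add_mul_swap x z), mul_neg, neg_neg, mul_assoc]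

/-- Canonical anticommutation relations for creation operators `c` and annihilation operators `a`;
`create_mul_self` does not follow from `create_anticomm` unless `2` is invertible. -/
structure IsCAR {R κ : Type*} [Ring R] [DecidableEq κ] (c a : κ → R) : Prop where
  create_mul_self : ∀ i, c i * c i = 0
  create_anticomm : ∀ i j, c i * c j = -(c j * c i)
  annihilate_anticomm : ∀ i j, a i * a j = -(a j * a i)
  annihilate_mul_create : ∀ i j, a i * c j = (if i = j then 1 else 0) - c j * a i

section CAR

attribute [local instance] LieRing.ofAssociativeRing

theorem Ring.lie_mul_right {R : Type*} [Ring R] (x y z : R) :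
    ⁅x, y * z⁆ = ⁅x, y⁆ * z + y * ⁅x, z⁆ := by
  simp only [Ring.lie_def]
  noncomm_ring

namespace IsCAR

variable {R κ : Type*} [Ring R] [DecidableEq κ] {c a : κ → R}

theorem lie_create (h : IsCAR c a) (i j k : κ) :
    ⁅c i * a j, c k⁆ = if j = k then c i else 0 := by
  rw [Ring.lie_def, mul_assoc, h.annihilate_mul_create, mul_sub, ← mul_assoc (c i),
    h.create_anticomm i k]
  split_ifs <;> noncomm_ring

theorem lie_annihilate (h : IsCAR c a) (i j k : κ) :
    ⁅c i * a j, a k⁆ = if i = k then -a j else 0 := by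
  rw [Ring.lie_def, ← mul_assoc, h.annihilate_mul_create, sub_mul, mul_assoc (c i) (a k),
    h.annihilate_anticomm k j]
  rcases eq_or_ne i k with rfl | hik
  · simp only [if_true]; noncomm_ring
  · simp only [if_neg hik, if_neg hik.symm]; noncomm_ring

theorem commute_xiEta_etaEtaEta {ι : Type*} [DecidableEq ι] {c a : ι ⊕ ι → R} (h : IsCAR c a)
    {p q : ι} (hpq : p ≠ q) (r : ι) :
    Commute (c (.inr q) * a (.inr p) - c (.inl p) * a (.inl q))
      (c (.inr q) * c (.inr r) * a (.inl p) - c (.inr p) * c (.inr r) * a (.inl q)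
        + c (.inr p) * c (.inr q) * a (.inl r)) := by
  rw [commute_iff_lie_eq]
  simp only [lie_add, lie_sub, sub_lie, Ring.lie_mul_right, h.lie_create, h.lie_annihilate,
    Sum.inl.injEq, Sum.inr.injEq, reduceCtorEq, if_false, hpq]
  split_ifs <;>
  simp only [add_mul, mul_sub, sub_mul, mul_neg, mul_zero, zero_mul, h.create_mul_self] <;>
  abel

end IsCAR

end CAR

namespace IsContraction

variable {l : ℕ} {a : Fin l ⊕ Fin l} {D : Module.End ℂ (Lam l)}

theorem apply_gen_mul (hD : IsContraction l a D) (b : Fin l ⊕ Fin l) (y : Lam l) :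
    D (gen l b * y) = (if a = b then y else 0) - gen l b * D y := by
  have h := hD.2.2 1 (fun _ => b) y
  simp only [List.ofFn_succ, List.ofFn_zero, List.prod_cons, List.prod_nil, mul_one,
    pow_one, neg_smul, one_smul] at h
  rw [h, hD.2.1, ite_mul, one_mul, zero_mul, ← sub_eq_add_neg]

theorem apply_ι_mul (hD : IsContraction l a D) (m : Fin l ⊕ Fin l → ℂ) (y : Lam l) :
    D (ExteriorAlgebra.ι ℂ m * y) = m a • y - ExteriorAlgebra.ι ℂ m * D y := by
  have hm : m = ∑ b, m b • Pi.single b 1 := by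
    ext j; simp [Finset.sum_apply, Pi.single_apply]
  rw [hm]
  simp only [map_sum, map_smul, Finset.sum_mul, smul_mul_assoc, Finset.sum_apply, Pi.smul_apply,
    Pi.single_apply, smul_eq_mul, mul_ite, mul_one, mul_zero,
    show ∀ b, ExteriorAlgebra.ι ℂ (Pi.single b (1 : ℂ)) = gen l b from fun _ => rfl,
    hD.apply_gen_mul, smul_sub, Finset.sum_sub_distrib, smul_ite, smul_zero, Finset.sum_ite_eq,
    Finset.mem_univ, if_true]

theorem mul_add_mul_eq_zero {b : Fin l ⊕ Fin l} {D' : Module.End ℂ (Lam l)}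
    (hD : IsContraction l a D) (hD' : IsContraction l b D') : D * D' + D' * D = 0 := by
  refine ExteriorAlgebra.eq_zero_of_map_one_of_map_ι_mul _ (by simp [hD.1, hD'.1]) fun m y => ?_
  simp only [LinearMap.add_apply, Module.End.mul_apply, hD.apply_ι_mul, hD'.apply_ι_mul, map_sub,
    map_smul, mul_add]
  abel

end IsContraction

theorem Lmul_eq_lmul (l : ℕ) : Lmul l = Algebra.lmul ℂ (Lam l) := rfl

theorem isCAR_Lmul_gen {l : ℕ} {pd : Fin l ⊕ Fin l → Module.End ℂ (Lam l)}
    (hpd : ∀ a, IsContraction l a (pd a)) : IsCAR (fun a => Lmul l (gen l a)) pd where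
  create_mul_self a := by rw [Lmul_eq_lmul, ← map_mul, gen, ExteriorAlgebra.ι_sq_zero, map_zero]
  create_anticomm a b := by
    rw [Lmul_eq_lmul, ← map_mul, ← map_mul, ← map_neg]
    exact congrArg _ (eq_neg_of_add_eq_zero_left (ExteriorAlgebra.ι_add_mul_swap _ _))
  annihilate_anticomm a b := eq_neg_of_add_eq_zero_left ((hpd a).mul_add_mul_eq_zero (hpd b))
  annihilate_mul_create a b := LinearMap.ext fun y => by
    simp only [Module.End.mul_apply, Lmul, LinearMap.mulLeft_apply, (hpd a).apply_gen_mul,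
      LinearMap.sub_apply]
    split_ifs <;> simp

section Hamiltonian

variable {l : ℕ} {pd : Fin l ⊕ Fin l → Module.End ℂ (Lam l)}

theorem Ham_eq_sum_swap (f : Lam l) : Ham l pd f = ∑ a, Lmul l (pd a f) * pd a.swap := by
  rw [Ham, Fintype.sum_sum_type, ← Finset.sum_add_distrib]
  rfl

theorem Ham_gen (hpd : ∀ a, IsContraction l a (pd a)) (b : Fin l ⊕ Fin l) :
    Ham l pd (gen l b) = pd b.swap := by
  simp only [Ham_eq_sum_swap, (hpd _).2.1, Lmul_eq_lmul, apply_ite (Algebra.lmul ℂ (Lam l)),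
    map_one, map_zero, ite_mul, one_mul, zero_mul, Finset.sum_ite_eq', Finset.mem_univ, if_true]

theorem Ham_gen_mul (hpd : ∀ a, IsContraction l a (pd a)) (b : Fin l ⊕ Fin l) (f : Lam l) :
    Ham l pd (gen l b * f) = Lmul l f * pd b.swap - Lmul l (gen l b) * Ham l pd f := by
  simp only [Ham_eq_sum_swap, (hpd _).apply_gen_mul, Lmul_eq_lmul, map_sub, map_mul,
    apply_ite (Algebra.lmul ℂ (Lam l)), map_zero, sub_mul, ite_mul, zero_mul, mul_assoc,
    Finset.sum_sub_distrib, Finset.sum_ite_eq', Finset.mem_univ, if_true, Finset.mul_sum]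

theorem Ham_gen_mul_gen (hpd : ∀ a, IsContraction l a (pd a)) (a b : Fin l ⊕ Fin l) :
    Ham l pd (gen l a * gen l b) =
      Lmul l (gen l b) * pd a.swap - Lmul l (gen l a) * pd b.swap := by
  rw [Ham_gen_mul hpd, Ham_gen hpd]

theorem Ham_gen_mul_gen_mul_gen (hpd : ∀ a, IsContraction l a (pd a)) (a b c : Fin l ⊕ Fin l) :
    Ham l pd (gen l a * gen l b * gen l c) =
      Lmul l (gen l b) * Lmul l (gen l c) * pd a.swap
        - Lmul l (gen l a) * Lmul l (gen l c) * pd b.swap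
        + Lmul l (gen l a) * Lmul l (gen l b) * pd c.swap := by
  rw [mul_assoc, Ham_gen_mul hpd, Ham_gen_mul_gen hpd, Lmul_eq_lmul, map_mul]
  simp only [mul_sub, mul_assoc]
  abel

end Hamiltonian

/-- for l ≥ 3, the even operators H_{ξ₁η₂} = L_{η₂}∘∂_{η₁} − L_{ξ₁}∘∂_{ξ₂}
and H_{ξ₂η₃} = L_{η₃}∘∂_{η₂} − L_{ξ₂}∘∂_{ξ₃} each commute with the odd operator
H_{η₁η₂η₃}, realizing the relations {ξ₁η₂, η₁η₂η₃} = 0 and {ξ₂η₃, η₁η₂η₃} = 0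
of §2.1.2. (Indices 0-based.) -/
theorem ham_Chevalley_Y_relations12 (l : ℕ) (hl : 3 ≤ l)
    (pd : (Fin l ⊕ Fin l) → Module.End ℂ (Lam l))
    (hpd : ∀ a, IsContraction l a (pd a))
    (D A B : Module.End ℂ (Lam l))
    (hD : D = Ham l pd (etav l ⟨0, by omega⟩ * etav l ⟨1, by omega⟩ * etav l ⟨2, by omega⟩))
    (hA : A = Ham l pd (xiv l ⟨0, by omega⟩ * etav l ⟨1, by omega⟩))
    (hB : B = Ham l pd (xiv l ⟨1, by omega⟩ * etav l ⟨2, by omega⟩)) :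
    A = Lmul l (etav l ⟨1, by omega⟩) ∘ₗ pd (Sum.inr ⟨0, by omega⟩)
        - Lmul l (xiv l ⟨0, by omega⟩) ∘ₗ pd (Sum.inl ⟨1, by omega⟩) ∧
    B = Lmul l (etav l ⟨2, by omega⟩) ∘ₗ pd (Sum.inr ⟨1, by omega⟩)
        - Lmul l (xiv l ⟨1, by omega⟩) ∘ₗ pd (Sum.inl ⟨2, by omega⟩) ∧
    A ∘ₗ D - D ∘ₗ A = 0 ∧ B ∘ₗ D - D ∘ₗ B = 0 := by
  have hCAR := isCAR_Lmul_gen hpd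
  have hA' := hA.trans (Ham_gen_mul_gen hpd _ _)
  have hB' := hB.trans (Ham_gen_mul_gen hpd _ _)
  have hD₀₁₂ := hD.trans (Ham_gen_mul_gen_mul_gen hpd _ _ _)
  have hrotate : etav l ⟨0, by omega⟩ * etav l ⟨1, by omega⟩ * etav l ⟨2, by omega⟩ =
      etav l ⟨1, by omega⟩ * etav l ⟨2, by omega⟩ * etav l ⟨0, by omega⟩ :=
    ExteriorAlgebra.ι_mul_ι_mul_ι_rotate _ _ _
  have hD₁₂₀ := (hD.trans (congrArg (Ham l pd) hrotate)).trans
    (Ham_gen_mul_gen_mul_gen hpd (.inr _) (.inr _) (.inr _))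
  refine ⟨hA', hB', ?_, ?_⟩
  · have h := hCAR.commute_xiEta_etaEtaEta (p := ⟨0, by omega⟩) (q := ⟨1, by omega⟩) (by simp)
      ⟨2, by omega⟩
    rw [hA', hD₀₁₂]
    exact sub_eq_zero.mpr h
  · have h := hCAR.commute_xiEta_etaEtaEta (p := ⟨1, by omega⟩) (q := ⟨2, by omega⟩) (by simp)
      ⟨0, by omega⟩
    rw [hB', hD₁₂₀]
    exact sub_eq_zero.mpr h
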